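/- Fix M, σ > 0 and α ∈ (0,1). There exists a constant C = C(M, σ, α) < ∞ such that for every φ ∈ [0,2π], every a ≥ 1, and every real random variable Y admitting a density p_Y satisfying p_Y(x) ≤ M exp(-x²/(2σ²)) for all x, one has E[|a cos φ + (sin φ) Y|^{-α}] ≤ C. -/

import Mathlib

/-!
Write `c = a cos φ` and `s = sin φ`, so that `c² + s² ≥ 1`. Off the set `|c + s Y| ≤ 1/4` the
integrand is at most `4^α`. On that set the density is at most `M (2 + 16σ²) |s|`: either
`|s| ≥ 1/2`, or `|c| ≥ 1/2` and then `|Y| ≥ 1/(4|s|)` lies deep in the Gaussian tail. The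
substitution `u = c + s x` costs a factor `|s|⁻¹`, which cancels that `|s|`, and what is left is
the integrable singularity `∫_{|u| ≤ 1/4} |u|^{-α} du`.
-/

open MeasureTheory Real Set
open scoped ENNReal

theorem lintegral_comp_abs (g : ℝ → ℝ≥0∞) :
    ∫⁻ x, g |x| = 2 * ∫⁻ x in Ioi 0, g x := by
  have hpos : ∫⁻ x in Ioi 0, g |x| = ∫⁻ x in Ioi 0, g x :=
    setLIntegral_congr_fun measurableSet_Ioi fun x hx => by rw [abs_of_pos hx]
  have hneg : ∫⁻ x in Iic 0, g |x| = ∫⁻ x in Ioi 0, g |x| := by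
    have hIio : Iio (0 : ℝ) = Neg.neg ⁻¹' Ioi 0 := by ext; simp
    rw [← setLIntegral_congr Iio_ae_eq_Iic, hIio]
    simpa only [abs_neg] using
      (Measure.measurePreserving_neg volume).setLIntegral_comp_preimage_emb
        (Homeomorph.neg ℝ).measurableEmbedding (fun x => g |x|) (Ioi 0)
  rw [← lintegral_add_compl _ measurableSet_Ioi, compl_Ioi, hneg, hpos, two_mul]

theorem setLIntegral_Ioc_zero_rpow {r : ℝ} (hr : -1 < r) {δ : ℝ} (hδ : 0 ≤ δ) :
    ∫⁻ t in Ioc 0 δ, ENNReal.ofReal (t ^ r) = ENNReal.ofReal (δ ^ (r + 1) / (r + 1)) := by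
  have hint : IntegrableOn (fun t : ℝ => t ^ r) (Ioc 0 δ) := by
    rw [← intervalIntegrable_iff_integrableOn_Ioc_of_le hδ]
    exact intervalIntegral.intervalIntegrable_rpow' hr
  have hnn : 0 ≤ᵐ[volume.restrict (Ioc 0 δ)] fun t : ℝ => t ^ r :=
    ae_restrict_of_forall_mem measurableSet_Ioc fun t ht => rpow_nonneg ht.1.le r
  rw [← ofReal_integral_eq_lintegral_ofReal hint hnn, ← intervalIntegral.integral_of_le hδ,
    integral_rpow (Or.inl hr), zero_rpow (by linarith), sub_zero]

theorem setLIntegral_abs_rpow_abs_le {r : ℝ} (hr : -1 < r) {δ : ℝ} (hδ : 0 ≤ δ) :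
    ∫⁻ u in {u : ℝ | |u| ≤ δ}, ENNReal.ofReal (|u| ^ r)
      = ENNReal.ofReal (2 * (δ ^ (r + 1) / (r + 1))) := by
  have hmeas : MeasurableSet {u : ℝ | |u| ≤ δ} := measurableSet_le (by fun_prop) measurable_const
  rw [← lintegral_indicator hmeas]
  change ∫⁻ u, (Iic δ).indicator (fun t => ENNReal.ofReal (t ^ r)) |u| = _
  rw [lintegral_comp_abs, setLIntegral_indicator measurableSet_Iic, inter_comm, Ioi_inter_Iic,
    setLIntegral_Ioc_zero_rpow hr hδ, ENNReal.ofReal_mul zero_le_two, ENNReal.ofReal_ofNat]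

theorem setLIntegral_preimage_add_mul {s : ℝ} (hs : s ≠ 0) (c : ℝ) (g : ℝ → ℝ≥0∞) (A : Set ℝ) :
    ∫⁻ x in (fun x => c + s * x) ⁻¹' A, g (c + s * x)
      = ENNReal.ofReal |s⁻¹| * ∫⁻ u in A, g u := by
  have hmul : MeasurePreserving (s * ·) volume (ENNReal.ofReal |s⁻¹| • volume) :=
    ⟨measurable_const_mul s, Real.map_volume_mul_left hs⟩
  have hemb : MeasurableEmbedding fun x => c + s * x :=
    ((Homeomorph.mulLeft₀ s hs).trans (Homeomorph.addLeft c)).measurableEmbedding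
  have haff : MeasurePreserving (fun x => c + s * x) volume (ENNReal.ofReal |s⁻¹| • volume) :=
    (measurePreserving_add_left _ c).comp hmul
  rw [haff.setLIntegral_comp_preimage_emb hemb, Measure.restrict_smul, lintegral_smul_measure,
    smul_eq_mul]

theorem setLIntegral_withDensity_le {α : Type*} [MeasurableSpace α] {μ : Measure α}
    {f : α → ℝ≥0∞} {S : Set α} (hS : MeasurableSet S) {K : ℝ≥0∞} (hf : ∀ x ∈ S, f x ≤ K)
    (g : α → ℝ≥0∞) :
    ∫⁻ x in S, g x ∂μ.withDensity f ≤ K * ∫⁻ x in S, g x ∂μ := by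
  rw [restrict_withDensity hS, ← smul_eq_mul, ← lintegral_smul_measure, ← withDensity_const]
  exact lintegral_mono' (withDensity_mono (ae_restrict_of_forall_mem hS hf)) le_rfl

theorem lintegral_abs_rpow_le_setLIntegral_add {α : Type*} [MeasurableSpace α] (μ : Measure α)
    [IsProbabilityMeasure μ] {u : α → ℝ} (hu : Measurable u) {r : ℝ} (hr : r ≤ 0) {δ : ℝ}
    (hδ : 0 < δ) :
    ∫⁻ x, ENNReal.ofReal (|u x| ^ r) ∂μ
      ≤ ∫⁻ x in {x | |u x| ≤ δ}, ENNReal.ofReal (|u x| ^ r) ∂μ + ENNReal.ofReal (δ ^ r) := by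
  have hS : MeasurableSet {x | |u x| ≤ δ} := measurableSet_le (by fun_prop) measurable_const
  rw [← lintegral_add_compl _ hS]
  gcongr
  calc ∫⁻ x in {x | |u x| ≤ δ}ᶜ, ENNReal.ofReal (|u x| ^ r) ∂μ
      ≤ ∫⁻ _ in {x | |u x| ≤ δ}ᶜ, ENNReal.ofReal (δ ^ r) ∂μ :=
        setLIntegral_mono measurable_const fun x (hx : ¬|u x| ≤ δ) =>
          ENNReal.ofReal_le_ofReal (rpow_le_rpow_of_nonpos hδ (not_le.mp hx).le hr)
    _ ≤ ENNReal.ofReal (δ ^ r) := by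
        rw [setLIntegral_const]
        exact mul_le_of_le_one_right' prob_le_one

theorem exp_neg_sq_div_le_of_abs_add_mul_le {σ : ℝ} (hσ : σ ≠ 0) {c s x : ℝ}
    (hcs : 1 ≤ c ^ 2 + s ^ 2) (hx : |c + s * x| ≤ 1 / 4) :
    exp (-(x ^ 2) / (2 * σ ^ 2)) ≤ (2 + 16 * σ ^ 2) * |s| := by
  rcases le_or_gt (1 / 2) |s| with hs | hs
  · have hexp : exp (-(x ^ 2) / (2 * σ ^ 2)) ≤ 1 := by
      rw [exp_le_one_iff, neg_div, neg_nonpos]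
      positivity
    nlinarith [sq_nonneg σ]
  · have hc : 1 / 2 ≤ |c| := by nlinarith [sq_abs c, sq_abs s, abs_nonneg s, abs_nonneg c]
    have hsx : 1 / 4 ≤ |s * x| := by
      have htri := abs_sub (c + s * x) (s * x)
      rw [add_sub_cancel_right] at htri
      linarith
    have hsx2 : 1 ≤ 16 * (s ^ 2 * x ^ 2) := by nlinarith [sq_abs (s * x)]
    have hx2 : 0 < x ^ 2 := by nlinarith [sq_nonneg s, sq_nonneg x]
    set t := x ^ 2 / (2 * σ ^ 2)
    have ht : 0 < t := by positivity
    calc exp (-(x ^ 2) / (2 * σ ^ 2)) = (exp t)⁻¹ := by rw [neg_div, exp_neg]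
      _ ≤ t⁻¹ := inv_anti₀ ht (by linarith [add_one_le_exp t])
      _ = 2 * σ ^ 2 / x ^ 2 := inv_div _ _
      _ ≤ 32 * σ ^ 2 * s ^ 2 := by
        rw [div_le_iff₀ hx2]
        nlinarith [sq_nonneg σ]
      _ ≤ (2 + 16 * σ ^ 2) * |s| := by
        nlinarith [sq_abs s, abs_nonneg s, sq_nonneg σ, mul_nonneg (sq_nonneg σ) (abs_nonneg s)]

theorem setLIntegral_abs_add_mul_rpow_withDensity_le {p : ℝ → ℝ} {c s δ K r : ℝ}
    (hr : -1 < r) (hδ : 0 ≤ δ) (hp : ∀ x, |c + s * x| ≤ δ → p x ≤ K * |s|) :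
    ∫⁻ x in {x | |c + s * x| ≤ δ}, ENNReal.ofReal (|c + s * x| ^ r)
        ∂volume.withDensity (fun x => ENNReal.ofReal (p x))
      ≤ ENNReal.ofReal (K * (2 * (δ ^ (r + 1) / (r + 1)))) := by
  have hS : MeasurableSet {x : ℝ | |c + s * x| ≤ δ} :=
    measurableSet_le (by fun_prop) measurable_const
  refine (setLIntegral_withDensity_le hS
    (fun x hx => ENNReal.ofReal_le_ofReal (hp x hx)) _).trans ?_
  rcases eq_or_ne s 0 with rfl | hs
  · simp
  · have hJ : 0 ≤ 2 * (δ ^ (r + 1) / (r + 1)) :=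
      mul_nonneg zero_le_two (div_nonneg (rpow_nonneg hδ _) (by linarith))
    change _ * ∫⁻ x in (fun x => c + s * x) ⁻¹' {u | |u| ≤ δ}, _ ≤ _
    rw [setLIntegral_preimage_add_mul hs c (fun u => ENNReal.ofReal (|u| ^ r)),
      setLIntegral_abs_rpow_abs_le hr hδ, ← mul_assoc, ← ENNReal.ofReal_mul' (abs_nonneg _),
      ← ENNReal.ofReal_mul' hJ, abs_inv, mul_assoc K, mul_inv_cancel₀ (abs_ne_zero.2 hs), mul_one]

/-- Uniform negative-moment bound: for fixed `M, σ > 0` and `α ∈ (0,1)`, there is a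
constant `C` such that for every `φ ∈ [0,2π]`, every `a ≥ 1`, and every real random
variable (here: its law `μ`) admitting a density `p` with `p(x) ≤ M exp(-x²/(2σ²))`,
one has `E[|a cos φ + (sin φ) Y|^{-α}] ≤ C`. -/
theorem negative_moment_uniform_bound
    (M σ α : ℝ) (hM : 0 < M) (hσ : 0 < σ) (hα : α ∈ Set.Ioo (0 : ℝ) 1) :
    ∃ C : ℝ, 0 < C ∧
      ∀ φ ∈ Set.Icc (0 : ℝ) (2 * π), ∀ a : ℝ, 1 ≤ a →
      ∀ p : ℝ → ℝ, (∀ x, 0 ≤ p x) → (∀ x, p x ≤ M * Real.exp (-(x ^ 2) / (2 * σ ^ 2))) →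
      ∀ μ : Measure ℝ, IsProbabilityMeasure μ →
        μ = volume.withDensity (fun x => ENNReal.ofReal (p x)) →
        (∫⁻ x, ENNReal.ofReal (|a * Real.cos φ + Real.sin φ * x| ^ (-α)) ∂μ)
          ≤ ENNReal.ofReal C := by
  obtain ⟨hα0, hα1⟩ := hα
  set K := M * (2 + 16 * σ ^ 2)
  set J := 2 * ((1 / 4 : ℝ) ^ (-α + 1) / (-α + 1))
  have hJ : 0 ≤ J := mul_nonneg zero_le_two (div_nonneg (by positivity) (by linarith))
  refine ⟨K * J + (1 / 4 : ℝ) ^ (-α), by positivity, ?_⟩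
  rintro φ - a ha p - hp μ hμ rfl
  have hcs : 1 ≤ (a * cos φ) ^ 2 + sin φ ^ 2 := by
    nlinarith [sin_sq_add_cos_sq φ, sq_nonneg (cos φ), mul_le_mul_of_nonneg_right
      (one_le_pow₀ (n := 2) ha) (sq_nonneg (cos φ))]
  have hdensity : ∀ x, |a * cos φ + sin φ * x| ≤ 1 / 4 → p x ≤ K * |sin φ| := fun x hx =>
    (hp x).trans <| by
      rw [mul_assoc]
      exact mul_le_mul_of_nonneg_left (exp_neg_sq_div_le_of_abs_add_mul_le hσ.ne' hcs hx) hM.le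
  calc _ ≤ _ + ENNReal.ofReal ((1 / 4 : ℝ) ^ (-α)) :=
        lintegral_abs_rpow_le_setLIntegral_add _ (by fun_prop) (by linarith) (by norm_num)
    _ ≤ ENNReal.ofReal (K * J) + ENNReal.ofReal ((1 / 4 : ℝ) ^ (-α)) := by
        gcongr
        exact setLIntegral_abs_add_mul_rpow_withDensity_le (by linarith) (by norm_num) hdensity
    _ = ENNReal.ofReal (K * J + (1 / 4 : ℝ) ^ (-α)) := by
        rw [ENNReal.ofReal_add (by positivity) (by positivity)]
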